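/- arXiv:1309.4406 — 4 statements merged into one kernel-verified Lean document; each statement's English description precedes it below -/
import Mathlib

section
/- Let G be a group and i, j ∈ ℕ, and set l = i + j. Let π : G ≀ Σ_l → Perm (Fin l) be the projection (g, σ) ↦ σ, let e : Fin i ⊕ Fin j ≃ Fin l be the canonical equivalence (finSumFinEquiv), and let S ⊆ Fin l be the image of Fin i under e. Then the homomorphism μ : (G ≀ Σ_i) × (G ≀ Σ_j) → G ≀ Σ_l is injective, and its range is exactly π⁻¹({σ ∈ Perm (Fin l) | σ '' S = S}), the preimage of the setwise stabilizer of S. (This is the subgroup identity (Σ_n ≀ Σ_l) ∩ (Σ_{nl} × Σ_i × Σ_j) = (Σ_n ≀ Σ_i) × (Σ_n ≀ Σ_j) inside Σ_l × Σ_{nl} used in the paper's Mackey-lemma argument for the coproduct compatibility.) -/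
open Equiv

/-- The action of `Perm I` on `I → G` by `(σ • g) i = g (σ⁻¹ i)`. -/
def permAut (G : Type*) [Group G] (I : Type*) : Equiv.Perm I →* MulAut (I → G) where
  toFun σ :=
    { toFun := fun g => g ∘ σ.symm
      invFun := fun g => g ∘ σ
      left_inv := fun g => by funext i; simp
      right_inv := fun g => by funext i; simp
      map_mul' := fun g h => rfl }
  map_one' := by ext g i; rfl
  map_mul' := fun σ τ => by ext g i; rfl

/-- The wreath product `G ≀ Σ(I)`. -/
abbrev Wreath (G : Type*) [Group G] (I : Type*) :=
  (I → G) ⋊[permAut G I] Equiv.Perm I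

/-- The homomorphism `(G ≀ Σ_i) × (G ≀ Σ_j) → G ≀ Σ_{i+j}` induced by the canonical
equivalence `finSumFinEquiv : Fin i ⊕ Fin j ≃ Fin (i + j)`. -/
def wreathMu (G : Type*) [Group G] (i j : ℕ) :
    Wreath G (Fin i) × Wreath G (Fin j) →* Wreath G (Fin (i + j)) where
  toFun p :=
    ⟨Sum.elim p.1.left p.2.left ∘ ⇑finSumFinEquiv.symm,
      (finSumFinEquiv.symm.trans ((p.1.right.sumCongr p.2.right).trans finSumFinEquiv) :
        Equiv.Perm (Fin (i + j)))⟩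
  map_one' := by
    ext c
    · rcases h : finSumFinEquiv.symm c with a | b <;>
        simp [h]
    · simp
  map_mul' := fun p q => by
    ext c
    · rcases h : finSumFinEquiv.symm c with a | b <;>
        (simp only [SemidirectProduct.mul_left]; simp [permAut, SemidirectProduct.mul_left, h, Equiv.Perm.mul_apply])
    · simp [Equiv.Perm.mul_apply]

/-! Functions on `α ⊕ β` are exactly pairs of functions (`Sum.elim`), and a permutation of `α ⊕ β`
mapping the left summand onto itself is exactly a pair of permutations (`Perm.sumCongr`).
Transported along `e : α ⊕ β ≃ γ`, this says that the base group of `G ≀ Σ(γ)` is hit freely and the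
top group exactly at the setwise stabiliser of `e '' range Sum.inl`. -/

open Set

namespace Equiv.Perm

variable {α β γ : Type*}

theorem image_range_inl_eq_iff_mem_range_sumCongrHom [Finite α] [Finite β] (σ : Perm (α ⊕ β)) :
    σ '' range Sum.inl = range Sum.inl ↔ σ ∈ (sumCongrHom α β).range := by
  refine ⟨fun h ↦ mem_sumCongrHom_range_of_perm_mapsTo_inl (mapsTo_iff_image_subset.2 h.subset),
    ?_⟩
  rintro ⟨⟨σ₁, σ₂⟩, rfl⟩
  rw [← range_comp]
  exact σ₁.surjective.range_comp Sum.inl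

theorem image_range_comp_inl_eq_iff_exists_permCongr_sumCongr [Finite α] [Finite β]
    (e : α ⊕ β ≃ γ) (σ : Perm γ) :
    σ '' range (e ∘ Sum.inl) = range (e ∘ Sum.inl) ↔
      ∃ τ : Perm α × Perm β, e.permCongr (τ.1.sumCongr τ.2) = σ := by
  have hconj : e.symm.permCongr σ '' range Sum.inl = e.symm '' (σ '' (e '' range Sum.inl)) := by
    rw [← image_comp, ← image_comp]; rfl
  rw [range_comp e Sum.inl, ← e.symm.image_eq_iff_eq, e.symm_image_image, ← hconj,
    image_range_inl_eq_iff_mem_range_sumCongrHom]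
  simp only [MonoidHom.mem_range, sumCongrHom_apply, ← permCongr_symm, ← eq_symm_apply]

end Equiv.Perm

namespace Wreath

variable (G : Type*) [Group G] {α β γ : Type*}

def sumMap (e : α ⊕ β ≃ γ) : Wreath G α × Wreath G β →* Wreath G γ where
  toFun p := ⟨Sum.elim p.1.left p.2.left ∘ e.symm, e.permCongr (p.1.right.sumCongr p.2.right)⟩
  map_one' := by ext c <;> simp
  map_mul' p q := by
    ext c
    · rcases h : e.symm c with a | b <;>
        (simp only [SemidirectProduct.mul_left]; simp [permAut, h, permCongr_def])
    · simp [Equiv.Perm.mul_apply]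

theorem sumMap_injective (e : α ⊕ β ≃ γ) : Function.Injective (sumMap G e) := by
  rintro ⟨⟨f₁, σ₁⟩, ⟨f₂, σ₂⟩⟩ ⟨⟨g₁, τ₁⟩, ⟨g₂, τ₂⟩⟩ h
  have hleft : Sum.elim f₁ f₂ = Sum.elim g₁ g₂ :=
    e.symm.surjective.injective_comp_right (congrArg SemidirectProduct.left h)
  have hright : Perm.sumCongrHom α β (σ₁, σ₂) = Perm.sumCongrHom α β (τ₁, τ₂) :=
    e.permCongr.injective (congrArg SemidirectProduct.right h)
  obtain ⟨rfl, rfl⟩ := Sum.elim_eq_iff.1 hleft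
  obtain ⟨rfl, rfl⟩ := Prod.ext_iff.1 (Perm.sumCongrHom_injective hright)
  rfl

theorem range_sumMap [Finite α] [Finite β] (e : α ⊕ β ≃ γ) :
    range (sumMap G e) =
      SemidirectProduct.rightHom ⁻¹'
        {σ : Perm γ | σ '' range (e ∘ Sum.inl) = range (e ∘ Sum.inl)} := by
  ext ⟨f, σ⟩
  simp only [mem_preimage, mem_ofPred_eq, SemidirectProduct.rightHom_eq_right,
    Perm.image_range_comp_inl_eq_iff_exists_permCongr_sumCongr]
  constructor
  · rintro ⟨p, hp⟩
    exact ⟨(p.1.right, p.2.right), congrArg SemidirectProduct.right hp⟩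
  · rintro ⟨⟨σ₁, σ₂⟩, hσ⟩
    refine ⟨(⟨f ∘ e ∘ Sum.inl, σ₁⟩, ⟨f ∘ e ∘ Sum.inr, σ₂⟩), SemidirectProduct.ext ?_ hσ⟩
    change Sum.elim ((f ∘ e) ∘ Sum.inl) ((f ∘ e) ∘ Sum.inr) ∘ e.symm = f
    rw [Sum.elim_comp_inl_inr, Function.comp_assoc, e.self_comp_symm, Function.comp_id]

end Wreath

theorem wreathMu_eq_sumMap (G : Type*) [Group G] (i j : ℕ) :
    wreathMu G i j = Wreath.sumMap G finSumFinEquiv :=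
  rfl

theorem statement1 (G : Type*) [Group G] (i j : ℕ) :
    Function.Injective (wreathMu G i j) ∧
      Set.range (wreathMu G i j) =
        (⇑(SemidirectProduct.rightHom :
            Wreath G (Fin (i + j)) →* Equiv.Perm (Fin (i + j)))) ⁻¹'
          {σ : Equiv.Perm (Fin (i + j)) |
            σ '' (Set.range fun a : Fin i => finSumFinEquiv (Sum.inl a)) =
              Set.range fun a : Fin i => finSumFinEquiv (Sum.inl a)} := by
  rw [wreathMu_eq_sumMap]
  exact ⟨Wreath.sumMap_injective G _, Wreath.range_sumMap G _⟩
end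

section
/- Let R be a commutative ring, E₀ and E₁ two R-modules, and m ∈ ℕ. Write E(false) = E₀ and E(true) = E₁. Then there is an R-linear isomorphism ⨂_{j ∈ Fin m} (E₀ ⊕ E₁) ≅ ⨁_{f : Fin m → Bool} ⨂_{j ∈ Fin m} E(f j), and this isomorphism is Perm (Fin m)-equivariant, where Perm (Fin m) acts on the left by permuting the tensor factors, and on the right a permutation σ carries the summand indexed by f to the summand indexed by f ∘ σ⁻¹ by permuting the tensor factors accordingly. (This is the decomposition (E₀ ⊕ E₁)^{⊠ m} ≅ ⊕_{i=0}^m W_i used to prove additivity of the paper's power operation τ.) -/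
open Equiv TensorProduct PiTensorProduct DirectSum

/-- For a permutation `σ` of `Fin m`, the linear endomorphism of
`⨁ (f : Fin m → Bool), ⨂ (j : Fin m), E (f j)` carrying the summand indexed by `f` to the
summand indexed by `f ∘ σ⁻¹` by permuting the tensor factors accordingly. -/
noncomputable def sumPermAction (R : Type*) [CommRing R] (m : ℕ) (E : Bool → Type*)
    [∀ b, AddCommGroup (E b)] [∀ b, Module R (E b)] (σ : Equiv.Perm (Fin m)) :
    (⨁ (f : Fin m → Bool), ⨂[R] j : Fin m, E (f j)) →ₗ[R]
      ⨁ (f : Fin m → Bool), ⨂[R] j : Fin m, E (f j) :=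
  DirectSum.toModule R _ _ fun f =>
    (DirectSum.lof R (Fin m → Bool) (fun f => ⨂[R] j : Fin m, E (f j))
        (fun j => f (σ.symm j))).comp
      (PiTensorProduct.reindex R (fun j => E (f j)) σ).toLinearMap
open Equiv TensorProduct PiTensorProduct DirectSum

/-!
Write `E false × E true ≅ ⨁ b, E b` and distribute the tensor power over this binary direct
sum (`PiTensorProduct.ofDirectSumEquiv`). Equivariance only has to be checked on pure tensors
whose factors each lie in one summand, where reindexing both sides visibly does the same thing.
-/

namespace PiTensorProduct

variable {R ι κ : Type*} [CommSemiring R] [Fintype ι] [DecidableEq κ]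
  {M : κ → Type*} [∀ k, AddCommMonoid (M k)] [∀ k, Module R (M k)]

theorem ofDirectSumEquiv_comp_reindex (σ : Perm ι) :
    ofDirectSumEquiv.toLinearMap ∘ₗ (reindex R (fun _ : ι => ⨁ k, M k) σ).toLinearMap =
      toModule R _ _ (fun p =>
          (lof R (ι → κ) (fun p => ⨂[R] i, M (p i)) fun i => p (σ.symm i)).comp
            (reindex R (fun i => M (p i)) σ).toLinearMap) ∘ₗ
        ofDirectSumEquiv.toLinearMap := by
  ext p x
  simp [reindex_tprod]

end PiTensorProduct

noncomputable def prodLinearEquivDirectSumBool (R : Type*) [CommSemiring R] (E : Bool → Type*)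
    [∀ b, AddCommMonoid (E b)] [∀ b, Module R (E b)] : (E false × E true) ≃ₗ[R] ⨁ b, E b :=
  LinearEquiv.ofLinearMap ((lof R Bool E false).coprod (lof R Bool E true))
    (toModule R Bool _ fun | false => .inl R _ _ | true => .inr R _ _)
    (by ext b x; cases b <;> simp) (by ext <;> simp)

theorem statement5 (R : Type*) [CommRing R] (m : ℕ) (E : Bool → Type*)
    [∀ b, AddCommGroup (E b)] [∀ b, Module R (E b)] :
    ∃ Φ : (⨂[R] _j : Fin m, (E false × E true)) ≃ₗ[R]
        ⨁ (f : Fin m → Bool), ⨂[R] j : Fin m, E (f j),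
      ∀ (σ : Equiv.Perm (Fin m)) (x : ⨂[R] _j : Fin m, (E false × E true)),
        Φ (PiTensorProduct.reindex R (fun _ : Fin m => E false × E true) σ x) =
          sumPermAction R m E σ (Φ x) := by
  let e := prodLinearEquivDirectSumBool R E
  refine ⟨(congr fun _ => e).trans ofDirectSumEquiv, fun σ x => ?_⟩
  have hcongr : congr (fun _ => e) (reindex R _ σ x) = reindex R _ σ (congr (fun _ => e) x) :=
    map_reindex (fun _ => e.toLinearMap) σ x
  rw [LinearEquiv.trans_apply, hcongr]
  exact LinearMap.congr_fun (ofDirectSumEquiv_comp_reindex σ) _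
end

section
/- Let Y be a type (with Fintype-decidable membership in a subset X ⊆ Y as needed), and n, m ∈ ℕ. Let e : Fin n ⊕ Fin m ≃ Fin (n+m) be the canonical equivalence, and define Ψ : Perm (Fin (n+m)) × (Fin n → Y) × (Fin m → X) → (Fin (n+m) → Y) by Ψ(σ, g, h) = (Sum.elim g (fun b ↦ ↑(h b))) ∘ e⁻¹ ∘ σ⁻¹. Then the range of Ψ is exactly F^{n+m}_n = {f : Fin (n+m) → Y | the set {i | f i ∉ X} has at most n elements}. (This is the surjectivity of the Σ_{n+m}-map Σ_{n+m} ×_{Σ_n × Σ_m} (Y^n × X^m) → F^{n+m}_n from the pushout square in the paper's Lemma identifying the filtration quotients.) -/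
/-!
A function `f` lies in the range exactly when, for some identification `τ : ι ≃ α ⊕ β`, every
coordinate indexed by `β` lands in `X`. Such a function has at most `|α|` coordinates outside `X`.
Conversely, if at most `|α|` coordinates of `f` lie outside `X`, enlarge that set of coordinates to
a set `T` with exactly `|α|` elements and let `τ` identify `T` with `α` and `Tᶜ` with `β`.
-/

section

variable {ι α β Y : Type*}

theorem exists_equiv_sum_forall_inr_notMem [Finite α] [Finite β] (e : α ⊕ β ≃ ι) {S : Set ι}
    (hS : S.ncard ≤ Nat.card α) : ∃ τ : ι ≃ α ⊕ β, ∀ b, τ.symm (.inr b) ∉ S := by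
  have : Finite ι := .of_equiv _ e
  have hι : Nat.card ι = Nat.card α + Nat.card β := by rw [← Nat.card_congr e, Nat.card_sum]
  obtain ⟨T, hST, -, hT⟩ := Set.exists_subsuperset_card_eq (Set.subset_univ S) hS
    (by simp [hι])
  obtain ⟨eT⟩ : Nonempty (T ≃ α) := Finite.card_eq.mp (by rw [Nat.card_coe_set_eq, hT])
  obtain ⟨eTc⟩ : Nonempty (↥Tᶜ ≃ β) := Finite.card_eq.mp <| by
    rw [Nat.card_coe_set_eq, Set.ncard_compl_of_ncard_eq_add T (by rw [hι, hT, add_comm])]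
  classical
  refine ⟨(Equiv.Set.sumCompl T).symm.trans (eT.sumCongr eTc), fun b hb => ?_⟩
  exact (eTc.symm b).2 (hST (by simpa using hb))

theorem ncard_setOf_sumElim_comp_notMem_le [Finite α] (X : Set Y) (τ : ι ≃ α ⊕ β) (g : α → Y)
    (h : β → X) : {i | (Sum.elim g (fun b => (h b : Y)) ∘ τ) i ∉ X}.ncard ≤ Nat.card α := by
  have hsub : {i | (Sum.elim g (fun b => (h b : Y)) ∘ τ) i ∉ X} ⊆
      Set.range (τ.symm ∘ Sum.inl) := by
    intro i hi
    rcases hτ : τ i with a | b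
    · exact ⟨a, by simp [← hτ]⟩
    · exact absurd (h b).2 (by simp_all)
  calc _ ≤ (Set.range (τ.symm ∘ Sum.inl)).ncard := Set.ncard_le_ncard hsub (Set.finite_range _)
    _ = Nat.card α := Set.ncard_range_of_injective (τ.symm.injective.comp Sum.inl_injective)

theorem range_sumElim_comp_perm [Finite α] [Finite β] (X : Set Y) (e : α ⊕ β ≃ ι) :
    Set.range (fun t : Equiv.Perm ι × (α → Y) × (β → X) =>
        (Sum.elim t.2.1 fun b => (t.2.2 b : Y)) ∘ e.symm ∘ ⇑(t.1⁻¹)) =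
      {f : ι → Y | {i | f i ∉ X}.ncard ≤ Nat.card α} := by
  ext f
  constructor
  · rintro ⟨⟨σ, g, h⟩, rfl⟩
    exact ncard_setOf_sumElim_comp_notMem_le X (σ⁻¹.trans e.symm) g h
  · intro hf
    obtain ⟨τ, hτ⟩ := exists_equiv_sum_forall_inr_notMem e hf
    refine ⟨((τ.trans e).symm, f ∘ τ.symm ∘ .inl,
      fun b => ⟨f (τ.symm (.inr b)), not_not.mp (hτ b)⟩), ?_⟩
    ext i
    obtain ⟨x, rfl⟩ := τ.symm.surjective i
    cases x <;> simp [Equiv.Perm.inv_def]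

end

theorem statement12 (Y : Type*) (X : Set Y) (n m : ℕ) :
    Set.range (fun t : Equiv.Perm (Fin (n + m)) × (Fin n → Y) × (Fin m → X) =>
        (Sum.elim t.2.1 fun b => (t.2.2 b : Y)) ∘ ⇑finSumFinEquiv.symm ∘ ⇑(t.1⁻¹)) =
      {f : Fin (n + m) → Y | {i | f i ∉ X}.ncard ≤ n} := by
  simpa using range_sumElim_comp_perm X (finSumFinEquiv (m := n) (n := m))
end

section
/- Let Y be a type, X ⊆ Y a subset, and n, m ∈ ℕ. Let e : Fin n ⊕ Fin m ≃ Fin (n+m) be the canonical equivalence, and define Φ : Perm (Fin (n+m)) × (Fin n → (Y \ X)) × (Fin m → X) → (Fin (n+m) → Y) by Φ(σ, g, h) = (Sum.elim (fun a ↦ ↑(g a)) (fun b ↦ ↑(h b))) ∘ e⁻¹ ∘ σ⁻¹. Then: (a) the range of Φ is exactly {f : Fin (n+m) → Y | the set {i | f i ∉ X} has exactly n elements}; and (b) Φ(σ, g, h) = Φ(σ', g', h') if and only if there exist ρ₁ ∈ Perm (Fin n) and ρ₂ ∈ Perm (Fin m) with g' = g ∘ ρ₁, h' = h ∘ ρ₂,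 and σ' = σ ∘ (e ∘ (Equiv.sumCongr ρ₁ ρ₂) ∘ e⁻¹). In other words, Φ descends to a bijection from the quotient of Perm (Fin (n+m)) × (Fin n → (Y \ X)) × (Fin m → X) by the evident right Σ_n × Σ_m-action onto the stratum F^{n+m}_n \ F^{n+m}_{n-1}. (This is the set-level content of the pushout square Σ_{n+m} ×_{Σ_n × Σ_m} (Y^n × X^m, F^n_{n-1} × X^m) → (F^{n+m}_n, F^{n+m}_{n-1}) in the paper's Lemma computing the filtration quotients.) -/
/-!
With `τ = σ ∘ e : Fin n ⊕ Fin m ≃ Fin (n + m)` we have `Φ (σ, g, h) = (g ⊔ h) ∘ τ⁻¹`, whose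
coordinates outside `X` are exactly `τ (Fin n)`. Conversely, any `f` with `n` coordinates
outside `X` arises from a `τ` sending `Fin n` onto them. Two triples have the same image iff
`ρ = τ⁻¹ τ'` satisfies `(g ⊔ h) ∘ ρ = g' ⊔ h'`; as `g` takes values outside `X` and `h` inside,
such a `ρ` preserves both summands and so is `ρ₁ ⊕ ρ₂`.
-/

/-- The map `Φ : Σ_{n+m} × (Y \ X)^n × X^m → Y^{n+m}`,
`Φ (σ, g, h) = (Sum.elim g h) ∘ finSumFinEquiv⁻¹ ∘ σ⁻¹`. -/
def Phi (Y : Type*) (X : Set Y) (n m : ℕ)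
    (t : Equiv.Perm (Fin (n + m)) × (Fin n → (Xᶜ : Set Y)) × (Fin m → X)) :
    Fin (n + m) → Y :=
  (Sum.elim (fun a => (t.2.1 a : Y)) fun b => (t.2.2 b : Y)) ∘
    ⇑finSumFinEquiv.symm ∘ ⇑(t.1⁻¹)

open Equiv

section
variable {Y ι α β : Type*} {X : Set Y}

theorem sumElim_val_notMem_iff (g : α → (Xᶜ : Set Y)) (h : β → X) (s : α ⊕ β) :
    Sum.elim (fun a => (g a : Y)) (fun b => (h b : Y)) s ∉ X ↔ s.isLeft := by
  cases s with
  | inl a => exact iff_of_true (g a).2 rfl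
  | inr b => simp

theorem setOf_sumElim_comp_symm_notMem (τ : α ⊕ β ≃ ι) (g : α → (Xᶜ : Set Y)) (h : β → X) :
    {i | (Sum.elim (fun a => (g a : Y)) (fun b => (h b : Y)) ∘ τ.symm) i ∉ X} =
      Set.range (τ ∘ Sum.inl) := by
  ext i
  obtain ⟨s, rfl⟩ := τ.surjective i
  simp only [Set.mem_ofPred_eq, Function.comp_apply, symm_apply_apply, sumElim_val_notMem_iff,
    Set.mem_range, τ.injective.eq_iff]
  cases s <;> simp

theorem ncard_setOf_sumElim_comp_symm_notMem (τ : α ⊕ β ≃ ι) (g : α → (Xᶜ : Set Y))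
    (h : β → X) :
    {i | (Sum.elim (fun a => (g a : Y)) (fun b => (h b : Y)) ∘ τ.symm) i ∉ X}.ncard =
      Nat.card α := by
  rw [setOf_sumElim_comp_symm_notMem, Set.ncard_range_of_injective]
  exact τ.injective.comp Sum.inl_injective

theorem exists_sumElim_comp_symm_eq (f : ι → Y) (τ : α ⊕ β ≃ ι)
    (hτ : ∀ s, f (τ s) ∉ X ↔ s.isLeft) :
    ∃ (g : α → (Xᶜ : Set Y)) (h : β → X),
      Sum.elim (fun a => (g a : Y)) (fun b => (h b : Y)) ∘ τ.symm = f := by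
  refine ⟨fun a => ⟨f (τ (.inl a)), (hτ _).2 rfl⟩,
    fun b => ⟨f (τ (.inr b)), not_not.1 fun hb => by simpa using (hτ _).1 hb⟩, ?_⟩
  ext i
  obtain ⟨s, rfl⟩ := τ.surjective i
  cases s <;> simp

theorem exists_sumEquiv_apply_iff_isLeft [Finite ι] {n m : ℕ} (p : ι → Prop)
    (hp : {i | p i}.ncard = n) (hι : Nat.card ι = n + m) :
    ∃ τ : Fin n ⊕ Fin m ≃ ι, ∀ s, p (τ s) ↔ s.isLeft := by
  classical
  have hpos : Nat.card {i // p i} = n := (Nat.card_coe_set_eq _).trans hp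
  have hneg : Nat.card {i // ¬p i} = m := by
    have := Nat.card_congr (sumCompl p)
    rw [Nat.card_sum, hpos] at this
    omega
  refine ⟨((Finite.equivFinOfCardEq hpos).symm.sumCongr
    (Finite.equivFinOfCardEq hneg).symm).trans (sumCompl p), ?_⟩
  rintro (a | b)
  · simpa using Subtype.prop _
  · simpa using ((Finite.equivFinOfCardEq hneg).symm b).prop

theorem sumElim_comp_symm_eq_iff [Finite α] [Finite β] (τ τ' : α ⊕ β ≃ ι)
    (g g' : α → (Xᶜ : Set Y)) (h h' : β → X) :
    Sum.elim (fun a => (g a : Y)) (fun b => (h b : Y)) ∘ τ.symm =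
        Sum.elim (fun a => (g' a : Y)) (fun b => (h' b : Y)) ∘ τ'.symm ↔
      ∃ (ρ₁ : Perm α) (ρ₂ : Perm β),
        g' = g ∘ ρ₁ ∧ h' = h ∘ ρ₂ ∧ τ' = (ρ₁.sumCongr ρ₂).trans τ := by
  constructor
  · intro heq
    set ρ : Perm (α ⊕ β) := τ'.trans τ.symm
    have hρ : ∀ s, Sum.elim (fun a => (g a : Y)) (fun b => (h b : Y)) (ρ s) =
        Sum.elim (fun a => (g' a : Y)) (fun b => (h' b : Y)) s := fun s => by
      simpa [ρ] using congrFun heq (τ' s)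
    have hmaps : Set.MapsTo ρ (Set.range Sum.inl) (Set.range Sum.inl) := by
      rintro _ ⟨a, rfl⟩
      have := (sumElim_val_notMem_iff g h (ρ (.inl a))).1 (hρ _ ▸ (g' a).2)
      exact Sum.isLeft_iff.1 this |>.imp fun _ h => h.symm
    obtain ⟨⟨ρ₁, ρ₂⟩, hρ₁₂⟩ := Perm.mem_sumCongrHom_range_of_perm_mapsTo_inl hmaps
    rw [Perm.sumCongrHom_apply] at hρ₁₂
    refine ⟨ρ₁, ρ₂, funext fun a => Subtype.ext ?_, funext fun b => Subtype.ext ?_, ?_⟩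
    · simpa [← hρ₁₂] using (hρ (.inl a)).symm
    · simpa [← hρ₁₂] using (hρ (.inr b)).symm
    · rw [hρ₁₂]
      ext s
      simp [ρ]
  · rintro ⟨ρ₁, ρ₂, rfl, rfl, rfl⟩
    ext i
    simp only [Function.comp_apply, symm_trans_apply, sumCongr_symm]
    cases τ.symm i <;> simp
end

theorem Phi_eq {Y : Type*} {X : Set Y} {n m : ℕ} (σ : Perm (Fin (n + m)))
    (g : Fin n → (Xᶜ : Set Y)) (h : Fin m → X) :
    Phi Y X n m (σ, g, h) =
      Sum.elim (fun a => (g a : Y)) (fun b => (h b : Y)) ∘ (finSumFinEquiv.trans σ).symm :=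
  rfl

theorem trans_eq_trans_trans_iff {α ι : Type*} (e : α ≃ ι) (σ σ' : Perm ι) (ρ : Perm α) :
    e.trans σ' = ρ.trans (e.trans σ) ↔ σ' = σ * (e.symm.trans (ρ.trans e) : Perm ι) := by
  constructor
  · intro h
    ext i
    simpa [Perm.mul_apply] using congrArg (· (e.symm i)) h
  · rintro rfl
    ext a
    simp [Perm.mul_apply]

theorem statement13 (Y : Type*) (X : Set Y) (n m : ℕ) :
    (Set.range (Phi Y X n m) = {f : Fin (n + m) → Y | {i | f i ∉ X}.ncard = n}) ∧
      ∀ (σ σ' : Equiv.Perm (Fin (n + m))) (g g' : Fin n → (Xᶜ : Set Y))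
        (h h' : Fin m → X),
        Phi Y X n m (σ, g, h) = Phi Y X n m (σ', g', h') ↔
          ∃ (ρ₁ : Equiv.Perm (Fin n)) (ρ₂ : Equiv.Perm (Fin m)),
            g' = g ∘ ρ₁ ∧ h' = h ∘ ρ₂ ∧
              σ' = σ * (finSumFinEquiv.symm.trans ((ρ₁.sumCongr ρ₂).trans finSumFinEquiv) :
                Equiv.Perm (Fin (n + m))) := by
  refine ⟨Set.ext fun f => ⟨?_, fun hf => ?_⟩, fun σ σ' g g' h h' => ?_⟩
  · rintro ⟨⟨σ, g, h⟩, rfl⟩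
    rw [Set.mem_ofPred_eq, Phi_eq, ncard_setOf_sumElim_comp_symm_notMem, Nat.card_fin]
  · obtain ⟨τ, hτ⟩ := exists_sumEquiv_apply_iff_isLeft (fun i => f i ∉ X) hf (Nat.card_fin _)
    obtain ⟨g, h, rfl⟩ := exists_sumElim_comp_symm_eq f τ hτ
    refine ⟨(finSumFinEquiv.symm.trans τ, g, h), ?_⟩
    rw [Phi_eq, ← trans_assoc, self_trans_symm, refl_trans]
  · rw [Phi_eq, Phi_eq, sumElim_comp_symm_eq_iff]
    simp only [trans_eq_trans_trans_iff]
end
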